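/- arXiv:2110.01820 — 3 statements merged into one kernel-verified Lean document; each statement's English description precedes it below -/
import Mathlib

section
/- (Vertical Multiplication Formula) Let B be an integer, n a positive natural number, and a, b : Fin n → ℤ digit sequences (indexed from the least significant position). For each k < 2n−1 define the tare component K_k = ∑_{i<j<n, i+j=k} (a_i − a_j)·(b_i − b_j), and let C_i = a_i·b_i be the vertical products. Then (∑_{i<n} a_i·B^i)·(∑_{j<n} b_j·B^j) = (∑_{i<n} C_i·B^i)·(∑_{j<n} B^j) − ∑_{k<2n-1} K_k·B^k. -/
/-- Vertical Multiplication Formula: for digit sequences `a b : Fin n → ℤ`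
in base `B`, with vertical products `C i = a i * b i` and tare components
`K k = ∑_{i<j<n, i+j=k} (a i - a j)(b i - b j)`, the product of the two
numbers equals the vertical product times the repunit minus the tare. -/
theorem vertical_multiplication_formula
    (B : ℤ) (n : ℕ) (hn : 0 < n) (a b : Fin n → ℤ) :
    (∑ i : Fin n, a i * B ^ (i : ℕ)) * (∑ j : Fin n, b j * B ^ (j : ℕ)) =
      (∑ i : Fin n, (a i * b i) * B ^ (i : ℕ)) * (∑ j : Fin n, B ^ (j : ℕ)) -
        ∑ k ∈ Finset.range (2 * n - 1),
          (∑ i : Fin n, ∑ j : Fin n,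
            if (i : ℕ) < (j : ℕ) ∧ (i : ℕ) + (j : ℕ) = k then
              (a i - a j) * (b i - b j) else 0) * B ^ k := by
  have hT : ∑ k ∈ Finset.range (2 * n - 1),
          (∑ i : Fin n, ∑ j : Fin n,
            if (i : ℕ) < (j : ℕ) ∧ (i : ℕ) + (j : ℕ) = k then
              (a i - a j) * (b i - b j) else 0) * B ^ k
      = ∑ i : Fin n, ∑ j : Fin n,
          if (i : ℕ) < (j : ℕ) then
            (a i - a j) * (b i - b j) * B ^ ((i : ℕ) + (j : ℕ)) else 0 := by
    simp_rw [Finset.sum_mul, ite_mul, zero_mul]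
    rw [Finset.sum_comm]
    refine Finset.sum_congr rfl fun i _ => ?_
    rw [Finset.sum_comm]
    refine Finset.sum_congr rfl fun j _ => ?_
    by_cases hij : (i : ℕ) < (j : ℕ)
    · rw [if_pos hij, Finset.sum_eq_single ((i : ℕ) + (j : ℕ))]
      · simp [hij]
      · intro k _ hk
        have : ¬((i : ℕ) < (j : ℕ) ∧ (i : ℕ) + (j : ℕ) = k) := by
          rintro ⟨-, rfl⟩; exact hk rfl
        rw [if_neg this]
      · intro h
        exact absurd (Finset.mem_range.mpr (by omega)) h
    · simp [hij]
  rw [hT, Finset.sum_mul_sum, Finset.sum_mul_sum]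
  have key : ∑ i : Fin n, ∑ j : Fin n,
      ((a i * b i * B ^ (i : ℕ)) * B ^ (j : ℕ)
        - (a i * B ^ (i : ℕ)) * (b j * B ^ (j : ℕ))
        - (if (i : ℕ) < (j : ℕ) then
            (a i - a j) * (b i - b j) * B ^ ((i : ℕ) + (j : ℕ)) else 0)) = 0 := by
    rw [← Finset.sum_product']
    refine Finset.sum_involution (fun p _ => (p.2, p.1)) ?_ ?_
      (fun p hp => Finset.mem_univ _) (fun p hp => rfl)
    · rintro ⟨i, j⟩ _
      dsimp only
      rcases lt_trichotomy ((i : ℕ)) ((j : ℕ)) with h | h | h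
      · rw [if_pos h, if_neg (by omega), pow_add]
        ring
      · have : i = j := Fin.ext h
        subst this
        simp
        ring
      · rw [if_neg (by omega), if_pos h, pow_add]
        ring
    · rintro ⟨i, j⟩ _ hf hcontra
      apply hf
      dsimp only at hcontra ⊢
      have h1 : i = j := (Prod.mk.injEq _ _ _ _).mp hcontra |>.2
      subst h1
      simp only [if_neg (lt_irrefl _)]
      ring
  simp only [Finset.sum_sub_distrib] at key
  linarith
end

section
/- (Correctness of the binary vertical multiplication, Algorithm 1) Let n be a positive natural number and a, b : Fin n → ℤ with C_i = a_i·b_i and K_k = ∑_{i<j<n, i+j=k} (a_i − a_j)·(b_i − b_j) for k < 2n−1. Then (∑_{i<n} a_i·2^i)·(∑_{j<n} b_j·2^j) = ∑_{i<n} C_i·2^{n+i} − ∑_{i<n} C_i·2^i − ∑_{k<2n-1} K_k·2^k. -/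
/-- Correctness of the binary vertical multiplication (Algorithm 1): for binary
digit sequences `a b : Fin n → ℤ` with vertical products `C i = a i * b i` and
tare components `K k = ∑_{i<j<n, i+j=k} (a i - a j)(b i - b j)`, one has
`a·b = (C shifted left by n bits) − C − K`. -/
theorem binary_vertical_multiplication_correct
    (n : ℕ) (hn : 0 < n) (a b : Fin n → ℤ) :
    (∑ i : Fin n, a i * 2 ^ (i : ℕ)) * (∑ j : Fin n, b j * 2 ^ (j : ℕ)) =
      (∑ i : Fin n, (a i * b i) * 2 ^ (n + (i : ℕ))) -
      (∑ i : Fin n, (a i * b i) * 2 ^ (i : ℕ)) -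
        ∑ k ∈ Finset.range (2 * n - 1),
          (∑ i : Fin n, ∑ j : Fin n,
            if (i : ℕ) < (j : ℕ) ∧ (i : ℕ) + (j : ℕ) = k then
              (a i - a j) * (b i - b j) else 0) * (2:ℤ) ^ k := by
  classical
  -- Step 1: rewrite the tare sum as a pairwise sum over i < j.
  have tare :
      (∑ k ∈ Finset.range (2 * n - 1),
        (∑ i : Fin n, ∑ j : Fin n,
          if (i : ℕ) < (j : ℕ) ∧ (i : ℕ) + (j : ℕ) = k then
            (a i - a j) * (b i - b j) else 0) * (2:ℤ) ^ k)
      = ∑ i : Fin n, ∑ j : Fin n,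
          if (i : ℕ) < (j : ℕ) then
            (a i - a j) * (b i - b j) * 2 ^ ((i : ℕ) + (j : ℕ)) else 0 := by
    simp_rw [Finset.sum_mul, ite_mul, zero_mul]
    rw [Finset.sum_comm]
    refine Finset.sum_congr rfl fun i _ => ?_
    rw [Finset.sum_comm]
    refine Finset.sum_congr rfl fun j _ => ?_
    by_cases hij : (i : ℕ) < (j : ℕ)
    · have hmem : (i : ℕ) + (j : ℕ) ∈ Finset.range (2 * n - 1) := by
        have hi : (i : ℕ) < n := i.isLt
        have hj : (j : ℕ) < n := j.isLt
        simp only [Finset.mem_range]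
        omega
      rw [if_pos hij]
      calc (∑ k ∈ Finset.range (2 * n - 1),
              if (i : ℕ) < (j : ℕ) ∧ (i : ℕ) + (j : ℕ) = k then
                (a i - a j) * (b i - b j) * 2 ^ k else 0)
          = ∑ k ∈ Finset.range (2 * n - 1),
              if (i : ℕ) + (j : ℕ) = k then
                (a i - a j) * (b i - b j) * 2 ^ k else 0 := by
            refine Finset.sum_congr rfl fun k _ => ?_
            simp [hij]
        _ = _ := by
            rw [Finset.sum_ite_eq (Finset.range (2 * n - 1)) ((i:ℕ)+(j:ℕ))
              (fun k => (a i - a j) * (b i - b j) * 2 ^ k), if_pos hmem]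
    · rw [if_neg hij]
      refine Finset.sum_eq_zero fun k _ => ?_
      simp [hij]
  rw [tare]
  -- Step 2: geometric series 2^n - 1.
  have geom' : ∀ m : ℕ, (∑ j ∈ Finset.range m, (2:ℤ) ^ j) = 2 ^ m - 1 := by
    intro m
    induction m with
    | zero => simp
    | succ k ih => rw [Finset.sum_range_succ, ih]; ring
  have geom : (∑ j : Fin n, (2:ℤ) ^ (j : ℕ)) = 2 ^ n - 1 := by
    rw [Fin.sum_univ_eq_sum_range]; exact geom' n
  -- Step 3: the shifted sums combine into a double sum.
  have shift :
      (∑ i : Fin n, (a i * b i) * 2 ^ (n + (i : ℕ))) -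
        (∑ i : Fin n, (a i * b i) * 2 ^ (i : ℕ))
      = ∑ i : Fin n, ∑ j : Fin n, a i * b i * 2 ^ ((i : ℕ) + (j : ℕ)) := by
    rw [← Finset.sum_sub_distrib]
    refine Finset.sum_congr rfl fun i _ => ?_
    have h1 : (∑ j : Fin n, a i * b i * 2 ^ ((i : ℕ) + (j : ℕ)))
        = a i * b i * 2 ^ (i : ℕ) * (∑ j : Fin n, (2:ℤ) ^ (j : ℕ)) := by
      rw [Finset.mul_sum]
      refine Finset.sum_congr rfl fun j _ => ?_
      rw [pow_add]; ring
    rw [h1, geom, pow_add]; ring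
  rw [shift]
  -- Step 4: expand the left-hand side.
  rw [Finset.sum_mul_sum]
  simp_rw [show ∀ (i j : Fin n),
      a i * 2 ^ (i:ℕ) * (b j * 2 ^ (j:ℕ)) = a i * b j * 2 ^ ((i:ℕ) + (j:ℕ)) from
      fun i j => by rw [pow_add]; ring]
  -- Step 5: symmetrization identity at the double-sum level.
  set A := ∑ i : Fin n, ∑ j : Fin n, a i * b j * (2:ℤ) ^ ((i:ℕ) + (j:ℕ)) with hA
  set B := ∑ i : Fin n, ∑ j : Fin n, a i * b i * (2:ℤ) ^ ((i:ℕ) + (j:ℕ)) with hB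
  set T := ∑ i : Fin n, ∑ j : Fin n,
      (if (i:ℕ) < (j:ℕ) then (a i - a j) * (b i - b j) * (2:ℤ) ^ ((i:ℕ) + (j:ℕ)) else 0)
    with hT
  have split : ∀ i j : Fin n,
      a i * b i * (2:ℤ) ^ ((i:ℕ) + (j:ℕ)) - a i * b j * 2 ^ ((i:ℕ) + (j:ℕ))
      = (if (i:ℕ) < (j:ℕ) then
          a i * b i * 2 ^ ((i:ℕ) + (j:ℕ)) - a i * b j * 2 ^ ((i:ℕ) + (j:ℕ)) else 0)
      + (if (j:ℕ) < (i:ℕ) then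
          a i * b i * 2 ^ ((i:ℕ) + (j:ℕ)) - a i * b j * 2 ^ ((i:ℕ) + (j:ℕ)) else 0) := by
    intro i j
    rcases lt_trichotomy (i:ℕ) (j:ℕ) with h | h | h
    · rw [if_pos h, if_neg (Nat.lt_asymm h)]; ring
    · have hij : i = j := Fin.ext h
      subst hij
      simp only [lt_irrefl, if_false]; ring
    · rw [if_neg (Nat.lt_asymm h), if_pos h]; ring
  have key : B - A = T := by
    rw [hB, hA, ← Finset.sum_sub_distrib]
    have inner : ∀ i : Fin n,
        ((∑ j : Fin n, a i * b i * (2:ℤ) ^ ((i:ℕ) + (j:ℕ))) -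
          ∑ j : Fin n, a i * b j * (2:ℤ) ^ ((i:ℕ) + (j:ℕ)))
        = (∑ j : Fin n,
            (if (i:ℕ) < (j:ℕ) then
              a i * b i * (2:ℤ) ^ ((i:ℕ) + (j:ℕ)) - a i * b j * 2 ^ ((i:ℕ) + (j:ℕ)) else 0))
          + ∑ j : Fin n,
            (if (j:ℕ) < (i:ℕ) then
              a i * b i * (2:ℤ) ^ ((i:ℕ) + (j:ℕ)) - a i * b j * 2 ^ ((i:ℕ) + (j:ℕ)) else 0) := by
      intro i
      rw [← Finset.sum_sub_distrib, ← Finset.sum_add_distrib]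
      exact Finset.sum_congr rfl fun j _ => split i j
    rw [Finset.sum_congr rfl fun i _ => inner i, Finset.sum_add_distrib]
    have swap : (∑ i : Fin n, ∑ j : Fin n,
        (if (j:ℕ) < (i:ℕ) then
          a i * b i * (2:ℤ) ^ ((i:ℕ) + (j:ℕ)) - a i * b j * 2 ^ ((i:ℕ) + (j:ℕ)) else 0))
      = ∑ i : Fin n, ∑ j : Fin n,
        (if (i:ℕ) < (j:ℕ) then
          a j * b j * (2:ℤ) ^ ((j:ℕ) + (i:ℕ)) - a j * b i * 2 ^ ((j:ℕ) + (i:ℕ)) else 0) := by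
      rw [Finset.sum_comm]
    rw [swap, hT, ← Finset.sum_add_distrib]
    refine Finset.sum_congr rfl fun i _ => ?_
    rw [← Finset.sum_add_distrib]
    refine Finset.sum_congr rfl fun j _ => ?_
    by_cases h : (i:ℕ) < (j:ℕ)
    · rw [if_pos h, if_pos h, if_pos h]
      rw [show (j:ℕ) + (i:ℕ) = (i:ℕ) + (j:ℕ) from Nat.add_comm _ _]
      ring
    · rw [if_neg h, if_neg h, if_neg h]; ring
  linarith [key]
end

section
/- (Correctness of Algorithm 3, vertical multiplication with three blocks) For any integers a₀, a₁, a₂, b₀, b₁, b₂ and any integer X, setting C_i = a_i·b_i for i = 0,1,2, K₀ = (a₁ − a₀)·(b₁ − b₀), K₁ = (a₂ − a₀)·(b₂ − b₀), K₂ = (a₂ − a₁)·(b₂ − b₁), and z₀ = C₀, z₁ = C₀ + C₁ − K₀, z₂ = C₀ + C₁ + C₂ − K₁, z₃ = C₁ + C₂ − K₂, z₄ = C₂, one has (a₂·X² + a₁·X + a₀)·(b₂·X² + b₁·X + b₀) = z₄·X⁴ + z₃·X³ + z₂·X² + z₁·X + z₀. -/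
/-- Correctness of Algorithm 3 (vertical multiplication with three blocks). -/
theorem algorithm3_vertical_multiplication_three_blocks
    (a₀ a₁ a₂ b₀ b₁ b₂ X : ℤ)
    (C₀ C₁ C₂ K₀ K₁ K₂ z₀ z₁ z₂ z₃ z₄ : ℤ)
    (hC₀ : C₀ = a₀ * b₀) (hC₁ : C₁ = a₁ * b₁) (hC₂ : C₂ = a₂ * b₂)
    (hK₀ : K₀ = (a₁ - a₀) * (b₁ - b₀))
    (hK₁ : K₁ = (a₂ - a₀) * (b₂ - b₀))
    (hK₂ : K₂ = (a₂ - a₁) * (b₂ - b₁))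
    (hz₀ : z₀ = C₀) (hz₁ : z₁ = C₀ + C₁ - K₀)
    (hz₂ : z₂ = C₀ + C₁ + C₂ - K₁) (hz₃ : z₃ = C₁ + C₂ - K₂)
    (hz₄ : z₄ = C₂) :
    (a₂ * X ^ 2 + a₁ * X + a₀) * (b₂ * X ^ 2 + b₁ * X + b₀) =
      z₄ * X ^ 4 + z₃ * X ^ 3 + z₂ * X ^ 2 + z₁ * X + z₀ := by
  subst_vars; ring
end
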